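/- With s(d,m) ∈ ℤ[q] the generating polynomial of basal billiard partitions with d parts and largest part m: s(d, 2n+1) = 0 unless n+1 ≤ d ≤ 2n, and for n+1 ≤ d ≤ 2n the following identity holds in ℤ[q]: s(d, 2n+1) · ∏_{i=1}^{2n−d}(1 − q^{2i}) · ∏_{i=1}^{d−n−1}(1 − q^{2i}) = q^{2n² − 2dn + d² + 3n} · ∏_{i=1}^{n−1}(1 − q^{2i}). (Equivalently, s(d,2n+1) = q^{2n²−2dn+d²+3n} times the Gaussian binomial coefficient [n−1 choose 2n−d] in the variable q².) -/

import Mathlib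

/-- An Euclidean billiard partition, recorded as the strictly decreasing list
of its parts: a nonempty strictly decreasing list of positive integers whose
smallest (last) part is even and in which no two adjacent parts are both odd. -/
def IsEBP (l : List ℕ) : Prop :=
  l ≠ [] ∧ l.Chain' (fun a b => b < a) ∧ (∀ x ∈ l, 0 < x) ∧
    (∀ m ∈ l.getLast?, Even m) ∧ l.Chain' (fun a b => ¬(Odd a ∧ Odd b))

/-- A basal billiard partition: an Euclidean billiard partition whose smallest
part equals `2` and in which adjacent parts differ by at most `2`. -/
def IsBasal (l : List ℕ) : Prop :=
  IsEBP l ∧ l.getLast? = some 2 ∧ l.Chain' (fun a b => a - b ≤ 2)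

open Classical Polynomial in
/-- `s d m ∈ ℤ[q]` is the generating polynomial `∑_π q^{|π|}` of basal billiard
partitions `π` with exactly `d` parts and largest part `m` (such a partition has
all parts `≤ m`, hence is encoded as a function `Fin d → Fin (m+1)`, and each
basal billiard partition with `d` parts and largest part `m` occurs exactly once
in the sum below); in particular `s 0 m = 0`. -/
noncomputable def s (d m : ℕ) : Polynomial ℤ :=
  ∑ f : Fin d → Fin (m + 1),
    if IsBasal (List.ofFn fun i => (f i : ℕ)) ∧
        (List.ofFn fun i => (f i : ℕ)).head? = some m
    then X ^ (List.ofFn fun i => (f i : ℕ)).sum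
    else 0

/-!
Stripping the largest part `m ≥ 3` off a basal partition leaves a basal partition whose largest
part is `m - 1` or, when `m` is even, possibly `m - 2`; hence
`s(d+1, m) = q^m (s(d, m-1) + [m even] s(d, m-2))`. For odd `m` only the first term survives, and
by induction on `n` the even case is `s(n+1+k, 2n+2) = q^{(n+1)(n+2)+k} e_k(q², q⁴, …, q^{2n})`,
because the two terms of the recursion match the two terms of the Pascal rule for the elementary
symmetric polynomial `e_k`. The closed form then follows from the `q`-binomial identity
`e_k(q², …, q^{2(k+j)}) (q²;q²)_k (q²;q²)_j = q^{k(k+1)} (q²;q²)_{k+j}`.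
The vanishing range comes from `d + 1 ≤ m ≤ 2d`: the parts strictly decrease down to `2`, in
steps of at most `2`.
-/

theorem isBasal_singleton_iff {a : ℕ} : IsBasal [a] ↔ a = 2 := by
  simp only [IsBasal, IsEBP, List.Chain', List.isChain_singleton, List.getLast?_singleton,
    Option.some_inj]
  constructor
  · exact fun h => h.2.1
  · rintro rfl
    simp

theorem isBasal_cons_cons_iff {a b : ℕ} {r : List ℕ} :
    IsBasal (a :: b :: r) ↔ (b < a ∧ a - b ≤ 2 ∧ ¬(Odd a ∧ Odd b)) ∧ IsBasal (b :: r) := by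
  simp only [IsBasal, IsEBP, List.Chain', List.isChain_cons_cons, List.getLast?_cons_cons,
    List.mem_cons, forall_eq_or_imp, ne_eq, reduceCtorEq, not_false_eq_true, true_and]
  constructor
  · rintro ⟨⟨⟨hlt, hdec⟩, ⟨-, hpos⟩, hev, ⟨hodd, hodds⟩⟩, hlast, ⟨hgap, hgaps⟩⟩
    exact ⟨⟨hlt, hgap, hodd⟩, ⟨hdec, hpos, hev, hodds⟩, hlast, hgaps⟩
  · rintro ⟨⟨hlt, hgap, hodd⟩, ⟨hdec, hpos, hev, hodds⟩, hlast, hgaps⟩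
    exact ⟨⟨⟨hlt, hdec⟩, ⟨by omega, hpos⟩, hev, ⟨hodd, hodds⟩⟩, hlast, ⟨hgap, hgaps⟩⟩

theorem IsBasal.forall_mem_tail_lt {a : ℕ} {t : List ℕ} (h : IsBasal (a :: t)) :
    ∀ x ∈ t, x < a := by
  induction t generalizing a with
  | nil => simp
  | cons b r ih =>
    obtain ⟨⟨hba, -⟩, hb⟩ := isBasal_cons_cons_iff.mp h
    simp only [List.mem_cons, forall_eq_or_imp]
    exact ⟨hba, fun x hx => (ih hb x hx).trans hba⟩

theorem IsBasal.length_add_two_le_and_le_two_mul {a : ℕ} {t : List ℕ} (h : IsBasal (a :: t)) :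
    t.length + 2 ≤ a ∧ a ≤ 2 * (t.length + 1) := by
  induction t generalizing a with
  | nil => simp [isBasal_singleton_iff.mp h]
  | cons b r ih =>
    obtain ⟨⟨hba, hgap, -⟩, hb⟩ := isBasal_cons_cons_iff.mp h
    have := ih hb
    simp only [List.length_cons]
    omega

theorem isBasal_cons_iff {m : ℕ} (hm : 3 ≤ m) {t : List ℕ} :
    IsBasal (m :: t) ↔ (t.head? = some (m - 1) ∨ Even m ∧ t.head? = some (m - 2)) ∧ IsBasal t := by
  cases t with
  | nil =>
    simp only [isBasal_singleton_iff, List.head?_nil, reduceCtorEq, and_false, or_false, false_and,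
      iff_false]
    omega
  | cons b r =>
    simp only [isBasal_cons_cons_iff, List.head?_cons, Option.some_inj, Nat.odd_iff, Nat.even_iff]
    refine and_congr_left fun _ => ?_
    omega

open Polynomial

open Classical in
noncomputable def basalLists (d m : ℕ) : Finset (List ℕ) :=
  ((Finset.univ : Finset (Fin d → Fin (m + 1))).image fun f => List.ofFn fun i => (f i : ℕ)).filter
    fun l => IsBasal l ∧ l.head? = some m

theorem mem_basalLists {d m : ℕ} {l : List ℕ} :
    l ∈ basalLists d m ↔ l.length = d ∧ IsBasal l ∧ l.head? = some m := by
  simp only [basalLists, Finset.mem_filter, Finset.mem_image, Finset.mem_univ, true_and]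
  constructor
  · rintro ⟨⟨f, rfl⟩, hl⟩
    exact ⟨List.length_ofFn, hl⟩
  · rintro ⟨rfl, hbasal, hhead⟩
    have hle : ∀ x ∈ l, x ≤ m := by
      obtain ⟨t, rfl⟩ := List.head?_eq_some_iff.mp hhead
      simpa using fun x hx => (hbasal.forall_mem_tail_lt x hx).le
    exact ⟨⟨fun i => ⟨l.get i, Nat.lt_succ_of_le (hle _ (List.get_mem l i))⟩, List.ofFn_get l⟩,
      hbasal, hhead⟩

theorem s_eq_sum_basalLists (d m : ℕ) : s d m = ∑ l ∈ basalLists d m, (X : ℤ[X]) ^ l.sum := by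
  classical
  rw [s, ← Finset.sum_filter, basalLists, Finset.filter_image,
    Finset.sum_image fun f _ g _ h =>
      funext fun i => Fin.val_injective (congrFun (List.ofFn_injective h) i)]

theorem s_eq_zero_of_not_succ_le_and_le_two_mul {d m : ℕ} (h : ¬(d + 1 ≤ m ∧ m ≤ 2 * d)) :
    s d m = 0 := by
  rw [s_eq_sum_basalLists, Finset.sum_eq_zero]
  intro l hl
  obtain ⟨rfl, hbasal, hhead⟩ := mem_basalLists.mp hl
  obtain ⟨t, rfl⟩ := List.head?_eq_some_iff.mp hhead
  have := hbasal.length_add_two_le_and_le_two_mul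
  simp only [List.length_cons] at h
  omega

theorem s_one_two : s 1 2 = (X : ℤ[X]) ^ 2 := by
  have : basalLists 1 2 = {[2]} := by
    ext l
    simp only [mem_basalLists, Finset.mem_singleton, List.length_eq_one_iff]
    constructor
    · rintro ⟨⟨a, rfl⟩, -, hhead⟩
      simpa using hhead
    · rintro rfl
      exact ⟨⟨2, rfl⟩, isBasal_singleton_iff.mpr rfl, rfl⟩
  simp [s_eq_sum_basalLists, this]

theorem basalLists_succ {m : ℕ} (hm : 3 ≤ m) (d : ℕ) :
    basalLists (d + 1) m =
      (basalLists d (m - 1) ∪ (basalLists d (m - 2)).filter fun _ => Even m).image (m :: ·) := by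
  ext l
  simp only [Finset.mem_image, Finset.mem_union, Finset.mem_filter, mem_basalLists]
  constructor
  · rintro ⟨hlen, hbasal, hhead⟩
    obtain ⟨t, rfl⟩ := List.head?_eq_some_iff.mp hhead
    obtain ⟨hnext, ht⟩ := (isBasal_cons_iff hm).mp hbasal
    exact ⟨t, by simp only [List.length_cons, add_left_inj] at hlen; tauto, rfl⟩
  · rintro ⟨t, ht, rfl⟩
    refine ⟨by simp only [List.length_cons]; tauto, (isBasal_cons_iff hm).mpr (by tauto), rfl⟩

theorem s_succ {m : ℕ} (hm : 3 ≤ m) (d : ℕ) :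
    s (d + 1) m = X ^ m * (s d (m - 1) + if Even m then s d (m - 2) else 0) := by
  have hdisj : Disjoint (basalLists d (m - 1)) ((basalLists d (m - 2)).filter fun _ => Even m) := by
    refine Finset.disjoint_left.mpr fun _ h₁ h₂ => ?_
    have hhead₁ := (mem_basalLists.mp h₁).2.2
    have hhead₂ := (mem_basalLists.mp (Finset.mem_filter.mp h₂).1).2.2
    rw [hhead₁, Option.some_inj] at hhead₂
    omega
  rw [s_eq_sum_basalLists, basalLists_succ hm,
    Finset.sum_image fun _ _ _ _ h => List.cons_injective h, Finset.sum_union hdisj]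
  split_ifs with heven <;> simp [heven, s_eq_sum_basalLists, Finset.mul_sum, pow_add, mul_add]

namespace Multiset

variable {R : Type*} [CommSemiring R]

theorem esymm_zero_right (s : Multiset R) : s.esymm 0 = 1 := by
  simp [esymm]

theorem esymm_eq_zero_of_card_lt {s : Multiset R} {k : ℕ} (h : card s < k) : s.esymm k = 0 := by
  simp [esymm, powersetCard_eq_empty _ h]

theorem esymm_cons_succ (a : R) (s : Multiset R) (k : ℕ) :
    (a ::ₘ s).esymm (k + 1) = s.esymm (k + 1) + a * s.esymm k := by
  simp [esymm, powersetCard_cons, sum_map_mul_left]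

end Multiset

noncomputable def evenPowers (n : ℕ) : Multiset ℤ[X] :=
  (Multiset.range n).map fun i => X ^ (2 * (i + 1))

/-- The `q`-Pochhammer symbol `(q²; q²)ₙ`. -/
noncomputable def evenQPochhammer (n : ℕ) : ℤ[X] :=
  ∏ i ∈ Finset.Icc 1 n, (1 - X ^ (2 * i))

theorem card_evenPowers (n : ℕ) : Multiset.card (evenPowers n) = n := by
  simp [evenPowers]

theorem evenPowers_succ (n : ℕ) : evenPowers (n + 1) = X ^ (2 * (n + 1)) ::ₘ evenPowers n := by
  simp [evenPowers, Multiset.range_succ]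

theorem evenQPochhammer_zero : evenQPochhammer 0 = 1 := by
  simp [evenQPochhammer]

theorem evenQPochhammer_succ (n : ℕ) :
    evenQPochhammer (n + 1) = evenQPochhammer n * (1 - X ^ (2 * (n + 1))) :=
  Finset.prod_Icc_succ_top (Nat.le_add_left 1 n) _

theorem esymm_evenPowers_mul_evenQPochhammer :
    ∀ a b : ℕ, (evenPowers (a + b)).esymm a * (evenQPochhammer a * evenQPochhammer b) =
      X ^ (a * (a + 1)) * evenQPochhammer (a + b)
  | 0, b => by simp [Multiset.esymm_zero_right, evenQPochhammer_zero]
  | a + 1, 0 => by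
    have h := esymm_evenPowers_mul_evenQPochhammer a 0
    simp only [add_zero, evenQPochhammer_zero, mul_one] at h ⊢
    rw [evenPowers_succ, Multiset.esymm_cons_succ,
      Multiset.esymm_eq_zero_of_card_lt (by simp [card_evenPowers]), evenQPochhammer_succ]
    linear_combination X ^ (2 * (a + 1)) * (1 - X ^ (2 * (a + 1)) : ℤ[X]) * h
  | a + 1, b + 1 => by
    have h₁ := esymm_evenPowers_mul_evenQPochhammer (a + 1) b
    have h₂ := esymm_evenPowers_mul_evenQPochhammer a (b + 1)
    rw [evenQPochhammer_succ a] at h₁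
    rw [show a + (b + 1) = a + 1 + b by ring, evenQPochhammer_succ b] at h₂
    rw [show a + 1 + (b + 1) = a + 1 + b + 1 by ring, evenPowers_succ, Multiset.esymm_cons_succ,
      evenQPochhammer_succ (a + 1 + b), evenQPochhammer_succ a, evenQPochhammer_succ b]
    linear_combination (1 - X ^ (2 * (b + 1)) : ℤ[X]) * h₁ +
      X ^ (2 * (a + 1 + b + 1)) * (1 - X ^ (2 * (a + 1)) : ℤ[X]) * h₂
termination_by a b => a + b

theorem s_odd_succ (n d : ℕ) : s (d + 1) (2 * n + 3) = X ^ (2 * n + 3) * s d (2 * n + 2) := by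
  rw [s_succ (by omega), if_neg (by rw [Nat.not_even_iff_odd]; exact ⟨n + 1, by ring⟩),
    add_zero, show 2 * n + 3 - 1 = 2 * n + 2 by omega]

theorem s_even (n k : ℕ) :
    s (n + 1 + k) (2 * n + 2) = X ^ ((n + 1) * (n + 2) + k) * (evenPowers n).esymm k := by
  induction n generalizing k with
  | zero =>
    cases k with
    | zero => simp [s_one_two, Multiset.esymm_zero_right]
    | succ k =>
      rw [s_eq_zero_of_not_succ_le_and_le_two_mul (by omega),
        Multiset.esymm_eq_zero_of_card_lt (by simp [card_evenPowers]), mul_zero]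
  | succ n ih =>
    rw [show n + 1 + 1 + k = n + 1 + k + 1 by ring, show 2 * (n + 1) + 2 = 2 * n + 4 by ring,
      s_succ (by omega), if_pos ⟨n + 2, by ring⟩,
      show 2 * n + 4 - 1 = 2 * n + 3 by omega, show 2 * n + 4 - 2 = 2 * n + 2 by omega]
    cases k with
    | zero =>
      rw [s_eq_zero_of_not_succ_le_and_le_two_mul (by omega), ih 0]
      simp only [Multiset.esymm_zero_right]
      ring
    | succ k =>
      rw [show n + 1 + (k + 1) = n + 1 + k + 1 by ring, s_odd_succ, ih k, add_assoc (n + 1) k 1,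
        ih (k + 1), evenPowers_succ, Multiset.esymm_cons_succ]
      ring

open Polynomial in
/-- `s(d, 2n+1) = 0` unless `n+1 ≤ d ≤ 2n`, and for `n+1 ≤ d ≤ 2n` one has, in `ℤ[q]`:
`s(d,2n+1)·∏_{i=1}^{2n−d}(1−q^{2i})·∏_{i=1}^{d−n−1}(1−q^{2i})
  = q^{2n²−2dn+d²+3n}·∏_{i=1}^{n−1}(1−q^{2i})`,
i.e. `s(d,2n+1)` equals `q^{2n²−2dn+d²+3n}` times the Gaussian binomial
coefficient `[n−1 choose 2n−d]` in the variable `q²`. -/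
theorem s_odd_closed_form :
    (∀ d n : ℕ, ¬(n + 1 ≤ d ∧ d ≤ 2 * n) → s d (2 * n + 1) = 0) ∧
    (∀ d n : ℕ, n + 1 ≤ d → d ≤ 2 * n →
      s d (2 * n + 1) * (∏ i ∈ Finset.Icc 1 (2 * n - d), (1 - (X : Polynomial ℤ) ^ (2 * i))) *
          (∏ i ∈ Finset.Icc 1 (d - n - 1), (1 - (X : Polynomial ℤ) ^ (2 * i))) =
        X ^ (2 * n ^ 2 + d ^ 2 + 3 * n - 2 * d * n) *
          ∏ i ∈ Finset.Icc 1 (n - 1), (1 - (X : Polynomial ℤ) ^ (2 * i))) := by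
  refine ⟨fun d n h => s_eq_zero_of_not_succ_le_and_le_two_mul (by omega), fun d n hd₁ hd₂ => ?_⟩
  obtain ⟨k, j, rfl, rfl⟩ : ∃ k j, n = k + j + 1 ∧ d = k + j + 1 + k + 1 :=
    ⟨d - n - 1, 2 * n - d, by omega, by omega⟩
  have hgauss := esymm_evenPowers_mul_evenQPochhammer k j
  unfold evenQPochhammer at hgauss
  have hexp : 2 * (k + j + 1) ^ 2 + (k + j + 1 + k + 1) ^ 2 + 3 * (k + j + 1) -
      2 * (k + j + 1 + k + 1) * (k + j + 1) =
        2 * (k + j) + 3 + ((k + j + 1) * (k + j + 2) + k) + k * (k + 1) :=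
    Nat.sub_eq_of_eq_add (by ring)
  rw [show 2 * (k + j + 1) + 1 = 2 * (k + j) + 3 by ring, s_odd_succ, s_even, hexp,
    show 2 * (k + j + 1) - (k + j + 1 + k + 1) = j by omega,
    show k + j + 1 + k + 1 - (k + j + 1) - 1 = k by omega, Nat.add_sub_cancel]
  linear_combination X ^ (2 * (k + j) + 3 + ((k + j + 1) * (k + j + 2) + k)) * hgauss
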